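/- arXiv:1403.6981 — 9 statements merged into one kernel-verified Lean document; each statement's English description precedes it below -/
import Mathlib

section
/- Let N be an abelian group and n ≥ 1 an integer. Suppose that for every integer m ≥ 1 there are endomorphisms F_m, V_m : N → N such that: (i) for all x ∈ N, (2+mn)•F_m(V_m(x)) − F_m(V_m(F_m(V_m(x)))) = (1+mn)•x; and (ii) for every x ∈ N there exists r(x) ∈ ℕ such that F_m(x) = 0 for all m ≥ r(x). Then N is either the trivial group or N is not finitely generated. -/
/-!
If `N` is finitely generated, the vanishing property holds uniformly on a finite generating set,
so `Fₘ = 0` for all large `m`. The Farrell identity then reads `(1 + mn) • x = 0` for all large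
`m`; the order of `x` divides both `1 + mn` and `1 + (m+1)n`, hence `n` and finally `1`.
-/

open Filter

theorem AddMonoidHom.eventually_eq_zero_of_fg {ι N M : Type*} [AddGroup N] [AddGroup.FG N]
    [AddMonoid M] {l : Filter ι} (F : ι → N →+ M) (hF : ∀ x, ∀ᶠ i in l, F i x = 0) :
    ∀ᶠ i in l, F i = 0 := by
  obtain ⟨S, hS⟩ := AddGroup.FG.out (H := N)
  filter_upwards [(eventually_all_finset S).2 fun s _ => hF s] with i hi
  exact AddMonoidHom.eq_of_eqOn_dense hS fun s hs => hi s hs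

theorem eq_zero_of_eventually_one_add_mul_nsmul_eq_zero {G : Type*} [AddMonoid G] {x : G} {n : ℕ}
    (hx : ∀ᶠ m in atTop, (1 + m * n) • x = 0) : x = 0 := by
  obtain ⟨R, hR⟩ := eventually_atTop.1 hx
  have hR₀ : addOrderOf x ∣ 1 + R * n := addOrderOf_dvd_iff_nsmul_eq_zero.2 (hR R le_rfl)
  have hR₁ : addOrderOf x ∣ 1 + R * n + n := by
    rw [addOrderOf_dvd_iff_nsmul_eq_zero, ← hR (R + 1) R.le_succ]
    ring_nf
  have hn : addOrderOf x ∣ n := (Nat.dvd_add_right hR₀).1 hR₁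
  have h1 : addOrderOf x ∣ 1 := (Nat.dvd_add_left (hn.mul_left R)).1 hR₀
  exact AddMonoid.addOrderOf_eq_one_iff.1 (Nat.dvd_one.1 h1)

theorem farrell_nil_trivial_or_infinitely_generated_general
    (N : Type*) [AddCommGroup N] (n : ℕ)
    (F V : ℕ → N →+ N)
    (h1 : ∀ m : ℕ, 1 ≤ m → ∀ x : N,
      (2 + m * n) • F m (V m x) - F m (V m (F m (V m x))) = (1 + m * n) • x)
    (h2 : ∀ x : N, ∃ r : ℕ, ∀ m : ℕ, r ≤ m → F m x = 0) :
    (∀ x : N, x = 0) ∨ ¬ AddGroup.FG N := by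
  refine or_iff_not_imp_right.2 fun hFG x => ?_
  have : AddGroup.FG N := not_not.1 hFG
  have hF : ∀ᶠ m in atTop, F m = 0 :=
    AddMonoidHom.eventually_eq_zero_of_fg F fun y => eventually_atTop.2 (h2 y)
  refine eq_zero_of_eventually_one_add_mul_nsmul_eq_zero (n := n) ?_
  filter_upwards [hF, eventually_ge_atTop 1] with m hFm hm
  simpa [hFm] using (h1 m hm x).symm

/-- **Theorem A (abstract form).** If an abelian group `N` carries, for every `m ≥ 1`,
endomorphisms `F m` and `V m` satisfying the Farrell identity
`(2+mn) • Fₘ(Vₘ x) - Fₘ(Vₘ(Fₘ(Vₘ x))) = (1+mn) • x` and the vanishing property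
(for every `x` there is `r(x)` with `Fₘ x = 0` for all `m ≥ r(x)`), then `N` is either
trivial or not finitely generated. -/
theorem farrell_nil_trivial_or_infinitely_generated
    (N : Type*) [AddCommGroup N] (n : ℕ) (hn : 1 ≤ n)
    (F V : ℕ → N →+ N)
    (h1 : ∀ m : ℕ, 1 ≤ m → ∀ x : N,
      (2 + m * n) • F m (V m x) - F m (V m (F m (V m x))) = (1 + m * n) • x)
    (h2 : ∀ x : N, ∃ r : ℕ, ∀ m : ℕ, r ≤ m → F m x = 0) :
    (∀ x : N, x = 0) ∨ ¬ AddGroup.FG N :=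
  farrell_nil_trivial_or_infinitely_generated_general N n F V h1 h2
end

section
/- Let N be an abelian group and n ≥ 1 an integer. Suppose that for every integer m ≥ 1 there are endomorphisms F_m, V_m : N → N such that: (i) for all x ∈ N, (2+mn)•F_m(V_m(x)) − F_m(V_m(F_m(V_m(x)))) = (1+mn)•x; and (ii) for every x ∈ N there exists r(x) ∈ ℕ such that F_m(x) = 0 for all m ≥ r(x). Then for every finite subgroup H of N there is an injective group homomorphism from ⨁_ℕ H (the direct sum of countably infinitely many copies of H) into N. -/
/-- **Theorem B, first half (abstract form).** If an abelian group `N` carries, for every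
`m ≥ 1`, endomorphisms `F m` and `V m` satisfying the Farrell identity and the vanishing
property, then for every finite subgroup `H ≤ N` the direct sum of countably infinitely many
copies of `H` (encoded as `ℕ →₀ H`) embeds into `N`. -/
theorem finite_subgroup_embeds_infinite_sum
    (N : Type*) [AddCommGroup N] (n : ℕ) (hn : 1 ≤ n)
    (F V : ℕ → N →+ N)
    (h1 : ∀ m : ℕ, 1 ≤ m → ∀ x : N,
      (2 + m * n) • F m (V m x) - F m (V m (F m (V m x))) = (1 + m * n) • x)
    (h2 : ∀ x : N, ∃ r : ℕ, ∀ m : ℕ, r ≤ m → F m x = 0) :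
    ∀ H : AddSubgroup N, Finite H →
      ∃ f : (ℕ →₀ H) →+ N, Function.Injective f := by
  intro H hH
  classical
  have := Fintype.ofFinite H
  choose r hr using h2
  set e : ℕ := Nat.card H with he_def
  have he : 0 < e := Nat.card_pos
  -- every element of H is killed by e
  have hord : ∀ x : H, e • (x : N) = 0 := by
    intro x
    have : e • x = 0 := card_nsmul_eq_zero'
    exact_mod_cast congrArg (Subtype.val) this
  -- the section maps
  set ψ : ℕ → (H →+ N) := fun m =>
    (V m).comp ((2 • AddMonoidHom.id N - (F m).comp (V m)).comp H.subtype) with hψ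
  have hψ_apply : ∀ m (x : H), ψ m x = V m (2 • (x : N) - F m (V m (x : N))) := by
    intro m x; simp [hψ]
  -- key identity : F m (ψ m x) = x when e ∣ m, 1 ≤ m
  have hkey : ∀ m : ℕ, 1 ≤ m → e ∣ m → ∀ x : H, F m (ψ m x) = (x : N) := by
    intro m hm1 hdvd x
    obtain ⟨c, hc⟩ : e ∣ m * n := hdvd.trans (Dvd.intro n rfl)
    have hx0 : (m * n) • (x : N) = 0 := by
      rw [hc, mul_nsmul, hord, smul_zero]
    have hW0 : (m * n) • (F m (V m (x : N))) = 0 := by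
      rw [← map_nsmul, ← map_nsmul, hx0, map_zero, map_zero]
    have h := h1 m hm1 (x : N)
    rw [add_nsmul, add_nsmul, hW0, hx0, add_zero, add_zero, one_smul] at h
    rw [hψ_apply, map_sub, map_sub, map_nsmul, map_nsmul]
    exact h
  -- eventual-vanishing bound for the image of ψ s
  set Rb : ℕ → ℕ := fun s => Finset.univ.sup (fun x : H => r (ψ s x)) with hRb
  have hRb_le : ∀ s (x : H) (m : ℕ), Rb s ≤ m → F m (ψ s x) = 0 := by
    intro s x m hm
    exact hr _ m (le_trans (Finset.le_sup (f := fun x : H => r (ψ s x)) (Finset.mem_univ x)) hm)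
  -- the sequence of levels
  let M : ℕ → ℕ := fun k => Nat.rec e (fun _ mk => e * (mk + Rb mk + 1)) k
  have hM0 : M 0 = e := rfl
  have hMs : ∀ k, M (k + 1) = e * (M k + Rb (M k) + 1) := fun k => rfl
  have hMdvd : ∀ k, e ∣ M k := by
    intro k; cases k with
    | zero => exact dvd_refl e
    | succ k => rw [hMs]; exact Dvd.intro _ rfl
  have hM1 : ∀ k, 1 ≤ M k := by
    intro k; cases k with
    | zero => exact he
    | succ k =>
      rw [hMs]
      exact Nat.one_le_iff_ne_zero.mpr (by positivity)
  have hMstep : ∀ k, M k + Rb (M k) + 1 ≤ M (k + 1) := by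
    intro k; rw [hMs]; exact Nat.le_mul_of_pos_left _ he
  have hMmono : ∀ j k, j ≤ k → M j ≤ M k := by
    intro j k hjk
    induction k with
    | zero => simpa [Nat.le_zero.mp hjk]
    | succ k ih =>
      rcases Nat.lt_or_ge j (k + 1) with h | h
      · exact le_trans (ih (Nat.lt_succ_iff.mp h)) (le_trans (by omega) (hMstep k))
      · have : j = k + 1 := le_antisymm hjk h
        simp [this]
  have hkill : ∀ j k : ℕ, j < k → ∀ x : H, F (M k) (ψ (M j) x) = 0 := by
    intro j k hjk x
    apply hRb_le
    calc Rb (M j) ≤ M (j + 1) := le_trans (by omega) (hMstep j)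
      _ ≤ M k := hMmono _ _ hjk
  -- the embedding
  set f : (ℕ →₀ H) →+ N := Finsupp.liftAddHom (fun k => ψ (M k)) with hf
  refine ⟨f, ?_⟩
  rw [injective_iff_map_eq_zero]
  intro g hg
  by_contra hgne
  have hsupp : g.support.Nonempty := Finsupp.support_nonempty_iff.mpr hgne
  set k := g.support.max' hsupp with hk
  have hkmem : k ∈ g.support := g.support.max'_mem hsupp
  have h0 : F (M k) (f g) = 0 := by rw [hg, map_zero]
  rw [hf, Finsupp.liftAddHom_apply, Finsupp.sum, map_sum] at h0
  have hsum : ∀ j ∈ g.support, j ≠ k → F (M k) (ψ (M j) (g j)) = 0 := by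
    intro j hj hjne
    exact hkill j k (lt_of_le_of_ne (g.support.le_max' j hj) hjne) _
  rw [Finset.sum_eq_single_of_mem k hkmem hsum] at h0
  rw [hkey (M k) (hM1 k) (hMdvd k) (g k)] at h0
  have : g k = 0 := Subtype.ext h0
  exact Finsupp.mem_support_iff.mp hkmem this
end

section
/- Let N be an abelian group and n ≥ 1 an integer. Suppose that for every integer m ≥ 1 there are endomorphisms F_m, V_m : N → N such that: (i) for all x ∈ N, (2+mn)•F_m(V_m(x)) − F_m(V_m(F_m(V_m(x)))) = (1+mn)•x; and (ii) for every x ∈ N there exists r(x) ∈ ℕ such that F_m(x) = 0 for all m ≥ r(x). If H is a finite subgroup of N which is a direct summand of N, then there is a subgroup of N containing H which is isomorphic to ⨁_ℕ H and which is a direct summand of N. -/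
/-!
For `m` divisible by `|H|`, identity (i) reduces on `H` to `2 FV - (FV)² = 1`, so
`ψₘ = ρ ∘ (2 Fₘ - Fₘ Vₘ Fₘ)` is a left inverse of `Vₘ` on `H`, while by (ii) every fixed element
of `N` is killed by `ψₘ` once `m` is large. Choosing `0 = m₀ < m₁ < ⋯` fast enough (with the copy
`H` itself at index `0`), the embeddings `V_{mₖ}|_H` and the maps `ψ_{mₖ}` form a triangular
system; Gram–Schmidt makes it biorthogonal, and the resulting copies of `H` span a summand
`≅ ⨁_ℕ H`, retracted onto by `x ↦ ∑ₖ ηₖ (ψₖ x)`, a finite sum by (ii) again.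
-/

open Filter

theorem extraction_rel_of_frequently {p : ℕ → Prop} {r : ℕ → ℕ → Prop} {a : ℕ} (ha : p a)
    (hp : ∃ᶠ n in atTop, p n) (hr : ∀ m, ∀ᶠ n in atTop, r m n) :
    ∃ φ : ℕ → ℕ, StrictMono φ ∧ φ 0 = a ∧ (∀ k, p (φ k)) ∧ ∀ ⦃j k⦄, j < k → r (φ j) (φ k) := by
  have hnext (t : Set ℕ) (ht : t.Finite) : ∃ n, p n ∧ ∀ m ∈ insert a t, m < n ∧ r m n :=
    (hp.and_eventually ((eventually_all_finite (ht.insert a)).2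
      fun m _ => (eventually_gt_atTop m).and (hr m))).exists
  obtain ⟨u, hu⟩ := Set.seq_of_forall_finite_exists hnext
  have hstart (k : ℕ) : a < u k ∧ r a (u k) := (hu k).2 a (Set.mem_insert a _)
  have hstep {j k : ℕ} (hjk : j < k) : u j < u k ∧ r (u j) (u k) :=
    (hu k).2 (u j) (Set.mem_insert_of_mem a ⟨j, hjk, rfl⟩)
  refine ⟨fun | 0 => a | k + 1 => u k, strictMono_nat_of_lt_succ ?_, rfl, ?_, ?_⟩
  · rintro (_ | k)
    exacts [(hstart 0).1, (hstep k.lt_succ_self).1]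
  · rintro (_ | k)
    exacts [ha, (hu k).1]
  · rintro (_ | j) (_ | k) hjk
    exacts [absurd hjk (lt_irrefl 0), (hstart k).2, absurd hjk (Nat.not_lt_zero _),
      (hstep (Nat.succ_lt_succ_iff.1 hjk)).2]

def AddSubgroup.HasRetraction {N : Type*} [AddCommGroup N] (K : AddSubgroup N) : Prop :=
  ∃ σ : N →+ N, (∀ x, σ x ∈ K) ∧ ∀ a ∈ K, σ a = a

theorem AddMonoidHom.range_hasRetraction_of_leftInverse {M N : Type*} [AddCommGroup M]
    [AddCommGroup N] {Φ : M →+ N} {Ψ : N →+ M} (h : Function.LeftInverse Ψ Φ) :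
    Φ.range.HasRetraction :=
  ⟨Φ.comp Ψ, fun x => ⟨Ψ x, rfl⟩, by rintro _ ⟨f, rfl⟩; simp [h f]⟩

section Biorthogonal

variable {H N : Type*} [AddCommGroup H] [AddCommGroup N] (e : ℕ → H →+ N) (ψ : ℕ → N →+ H)

/-- Gram–Schmidt with respect to the functionals `ψ`. -/
def biorthogonalize : ℕ → H →+ N
  | k => e k - ∑ j : Fin k, (biorthogonalize j).comp ((ψ j).comp (e k))

theorem biorthogonalize_apply (k : ℕ) (h : H) :
    biorthogonalize e ψ k h =
      e k h - ∑ j ∈ Finset.range k, biorthogonalize e ψ j (ψ j (e k h)) := by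
  rw [biorthogonalize,
    Fin.sum_univ_eq_sum_range (fun j => (biorthogonalize e ψ j).comp ((ψ j).comp (e k)))]
  simp

variable {e ψ}

theorem apply_biorthogonalize_of_lt (htri : ∀ ⦃i j⦄, i < j → ∀ h, ψ j (e i h) = 0)
    {j k : ℕ} (hkj : k < j) (h : H) : ψ j (biorthogonalize e ψ k h) = 0 := by
  induction k using Nat.strong_induction_on generalizing h with
  | _ k ih =>
    rw [biorthogonalize_apply, map_sub, map_sum, htri hkj,
      Finset.sum_eq_zero fun i hi =>
        ih i (Finset.mem_range.1 hi) (hkj.trans' (Finset.mem_range.1 hi)) _]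
    simp

theorem apply_biorthogonalize_self (hdiag : ∀ k h, ψ k (e k h) = h)
    (htri : ∀ ⦃i j⦄, i < j → ∀ h, ψ j (e i h) = 0) (k : ℕ) (h : H) :
    ψ k (biorthogonalize e ψ k h) = h := by
  rw [biorthogonalize_apply, map_sub, map_sum, hdiag,
    Finset.sum_eq_zero fun i hi => apply_biorthogonalize_of_lt htri (Finset.mem_range.1 hi) _]
  simp

theorem apply_biorthogonalize_of_gt (hdiag : ∀ k h, ψ k (e k h) = h)
    (htri : ∀ ⦃i j⦄, i < j → ∀ h, ψ j (e i h) = 0) {j k : ℕ} (hjk : j < k) (h : H) :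
    ψ j (biorthogonalize e ψ k h) = 0 := by
  induction k using Nat.strong_induction_on generalizing h with
  | _ k ih =>
    have hother (i : ℕ) (hi : i ∈ Finset.range k) (hij : i ≠ j) :
        ψ j (biorthogonalize e ψ i (ψ i (e k h))) = 0 := by
      rcases hij.lt_or_gt with hij | hij
      · exact apply_biorthogonalize_of_lt htri hij _
      · exact ih i (Finset.mem_range.1 hi) hij _
    rw [biorthogonalize_apply, map_sub, map_sum, Finset.sum_eq_single_of_mem j
      (Finset.mem_range.2 hjk) hother, apply_biorthogonalize_self hdiag htri, sub_self]

theorem apply_biorthogonalize (hdiag : ∀ k h, ψ k (e k h) = h)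
    (htri : ∀ ⦃i j⦄, i < j → ∀ h, ψ j (e i h) = 0) (j k : ℕ) (h : H) :
    ψ j (biorthogonalize e ψ k h) = Finsupp.single k h j := by
  rcases lt_trichotomy j k with hjk | rfl | hjk
  · rw [apply_biorthogonalize_of_gt hdiag htri hjk, Finsupp.single_eq_of_ne hjk.ne]
  · rw [apply_biorthogonalize_self hdiag htri, Finsupp.single_eq_same]
  · rw [apply_biorthogonalize_of_lt htri hjk, Finsupp.single_eq_of_ne hjk.ne']

end Biorthogonal

section Coordinates

variable {H N : Type*} [AddCommGroup H] [AddCommGroup N]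

noncomputable def coordinates (ψ : ℕ → N →+ H) (hψ : ∀ x, ∀ᶠ k in atTop, ψ k x = 0) :
    N →+ (ℕ →₀ H) where
  toFun x := Finsupp.ofSupportFinite (fun k => ψ k x) <| by
    rw [← Nat.cofinite_eq_atTop] at hψ
    exact eventually_cofinite.1 (hψ x)
  map_zero' := Finsupp.ext fun k => map_zero (ψ k)
  map_add' x y := Finsupp.ext fun k => map_add (ψ k) x y

theorem coordinates_apply (ψ : ℕ → N →+ H) (hψ : ∀ x, ∀ᶠ k in atTop, ψ k x = 0) (x : N)
    (k : ℕ) : coordinates ψ hψ x k = ψ k x :=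
  rfl

theorem leftInverse_coordinates_liftAddHom {η : ℕ → H →+ N} {ψ : ℕ → N →+ H}
    (hψ : ∀ x, ∀ᶠ k in atTop, ψ k x = 0) (hηψ : ∀ j k h, ψ j (η k h) = Finsupp.single k h j) :
    Function.LeftInverse (coordinates ψ hψ) (Finsupp.liftAddHom η) := by
  intro f
  ext j
  rw [coordinates_apply, Finsupp.liftAddHom_apply, map_finsuppSum]
  simp only [hηψ]
  rw [← Finsupp.sum_apply, Finsupp.sum_single]

theorem exists_retract_of_triangular {e : ℕ → H →+ N} {ψ : ℕ → N →+ H}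
    (hdiag : ∀ k h, ψ k (e k h) = h) (htri : ∀ ⦃i j⦄, i < j → ∀ h, ψ j (e i h) = 0)
    (hψ : ∀ x, ∀ᶠ k in atTop, ψ k x = 0) :
    ∃ K : AddSubgroup N, (∀ h, e 0 h ∈ K) ∧ Nonempty (K ≃+ (ℕ →₀ H)) ∧ K.HasRetraction := by
  have hinv := leftInverse_coordinates_liftAddHom hψ (apply_biorthogonalize hdiag htri)
  refine ⟨(Finsupp.liftAddHom (biorthogonalize e ψ)).range, fun h => ⟨Finsupp.single 0 h, ?_⟩,
    ⟨(AddMonoidHom.ofInjective hinv.injective).symm⟩,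
    AddMonoidHom.range_hasRetraction_of_leftInverse hinv⟩
  rw [Finsupp.liftAddHom_apply_single, biorthogonalize_apply]
  simp

end Coordinates

theorem two_nsmul_sub_eq_self_of_nsmul_eq_zero {N : Type*} [AddCommGroup N] (f g : N →+ N)
    {a : ℕ} {x : N} (h : (2 + a) • f (g x) - f (g (f (g x))) = (1 + a) • x) (ha : a • x = 0) :
    2 • f (g x) - f (g (f (g x))) = x := by
  have hax : a • f (g x) = 0 := by rw [← map_nsmul, ← map_nsmul, ha, map_zero, map_zero]
  rwa [add_nsmul, add_nsmul, one_nsmul, hax, ha, add_zero, add_zero] at h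

namespace Farrell

variable {N : Type*} [AddCommGroup N] (F V : ℕ → N →+ N) {H : AddSubgroup N} (ρ : N →+ H)

/-- Index `0` encodes `H` itself (with `ρ` and the inclusion), index `m ≠ 0` the copy `Vₘ(H)`. -/
noncomputable def proj (m : ℕ) : N →+ H :=
  if m = 0 then ρ else ρ.comp (2 • F m - (F m).comp ((V m).comp (F m)))

variable (H) in
def incl (m : ℕ) : H →+ N :=
  if m = 0 then H.subtype else (V m).comp H.subtype

theorem proj_apply_eq_zero {m : ℕ} (hm : m ≠ 0) {x : N} (hx : F m x = 0) :
    proj F V ρ m x = 0 := by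
  simp [proj, hm, hx]

theorem eventually_proj_eq_zero (hF : ∀ x : N, ∃ r : ℕ, ∀ m : ℕ, r ≤ m → F m x = 0) (x : N) :
    ∀ᶠ m in atTop, proj F V ρ m x = 0 := by
  obtain ⟨r, hr⟩ := hF x
  filter_upwards [eventually_ge_atTop r, eventually_ne_atTop 0] with m hrm hm
  exact proj_apply_eq_zero F V ρ hm (hr m hrm)

theorem eventually_proj_incl_eq_zero [Finite H]
    (hF : ∀ x : N, ∃ r : ℕ, ∀ m : ℕ, r ≤ m → F m x = 0) (i : ℕ) :
    ∀ᶠ m in atTop, ∀ h, proj F V ρ m (incl V H i h) = 0 :=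
  eventually_all.2 fun _ => eventually_proj_eq_zero F V ρ hF _

theorem proj_incl_self [Finite H] (hρ : ∀ h : H, ρ h = h) {n : ℕ}
    (hFV : ∀ m : ℕ, 1 ≤ m → ∀ x : N,
      (2 + m * n) • F m (V m x) - F m (V m (F m (V m x))) = (1 + m * n) • x)
    {m : ℕ} (hm : Nat.card H ∣ m) (h : H) : proj F V ρ m (incl V H m h) = h := by
  rcases eq_or_ne m 0 with rfl | hm0
  · simp [proj, incl, hρ]
  have hmn : (m * n) • (h : N) = 0 := addOrderOf_dvd_iff_nsmul_eq_zero.1 <|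
    (AddSubgroup.addOrderOf_coe h ▸ addOrderOf_dvd_natCard h).trans (hm.mul_right n)
  have hFVh := two_nsmul_sub_eq_self_of_nsmul_eq_zero _ _
    (hFV m (Nat.one_le_iff_ne_zero.2 hm0) h) hmn
  simp only [proj, incl, hm0, if_false, AddMonoidHom.comp_apply, AddMonoidHom.sub_apply,
    AddMonoidHom.nsmul_apply, AddSubgroup.coe_subtype]
  rw [hFVh, hρ]

end Farrell

theorem finite_summand_extends_to_infinite_sum_summand_general
    (N : Type*) [AddCommGroup N] (n : ℕ)
    (F V : ℕ → N →+ N)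
    (h1 : ∀ m : ℕ, 1 ≤ m → ∀ x : N,
      (2 + m * n) • F m (V m x) - F m (V m (F m (V m x))) = (1 + m * n) • x)
    (h2 : ∀ x : N, ∃ r : ℕ, ∀ m : ℕ, r ≤ m → F m x = 0)
    (H : AddSubgroup N) (hHfin : Finite H)
    (ρ : N →+ N) (hρmem : ∀ x : N, ρ x ∈ H) (hρid : ∀ h ∈ H, ρ h = h) :
    ∃ K : AddSubgroup N, H ≤ K ∧ Nonempty (K ≃+ (ℕ →₀ H)) ∧
      ∃ σ : N →+ N, (∀ x : N, σ x ∈ K) ∧ ∀ a ∈ K, σ a = a := by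
  let ρH : N →+ H := ρ.codRestrict H hρmem
  have hρH (h : H) : ρH h = h := Subtype.ext (hρid h h.2)
  have hdvd : ∃ᶠ m in atTop, Nat.card H ∣ m := frequently_atTop.2 fun a =>
    ⟨Nat.card H * a, Nat.le_mul_of_pos_left a Nat.card_pos, dvd_mul_right _ _⟩
  obtain ⟨φ, hφ, hφ0, hdiag, htri⟩ := extraction_rel_of_frequently
    (Farrell.proj_incl_self F V ρH hρH h1 (dvd_zero _))
    (hdvd.mono fun _ hm => Farrell.proj_incl_self F V ρH hρH h1 hm)
    (Farrell.eventually_proj_incl_eq_zero F V ρH h2)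
  obtain ⟨K, hHK, hiso, hret⟩ := exists_retract_of_triangular hdiag htri
    fun x => hφ.tendsto_atTop.eventually (Farrell.eventually_proj_eq_zero F V ρH h2 x)
  refine ⟨K, fun h hh => ?_, hiso, hret⟩
  simpa [hφ0, Farrell.incl] using hHK ⟨h, hh⟩

/-- **Theorem B, second half (abstract form).** Under the Farrell identity and vanishing
hypotheses, if a finite subgroup `H ≤ N` is a direct summand of `N` (i.e. there is a
retraction of `N` onto `H`), then there is a subgroup of `N` containing `H` which is
isomorphic to `⨁_ℕ H` (encoded as `ℕ →₀ H`) and is itself a direct summand of `N`. -/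
theorem finite_summand_extends_to_infinite_sum_summand
    (N : Type*) [AddCommGroup N] (n : ℕ) (hn : 1 ≤ n)
    (F V : ℕ → N →+ N)
    (h1 : ∀ m : ℕ, 1 ≤ m → ∀ x : N,
      (2 + m * n) • F m (V m x) - F m (V m (F m (V m x))) = (1 + m * n) • x)
    (h2 : ∀ x : N, ∃ r : ℕ, ∀ m : ℕ, r ≤ m → F m x = 0)
    (H : AddSubgroup N) (hHfin : Finite H)
    (ρ : N →+ N) (hρmem : ∀ x : N, ρ x ∈ H) (hρid : ∀ h ∈ H, ρ h = h) :
    ∃ K : AddSubgroup N, H ≤ K ∧ Nonempty (K ≃+ (ℕ →₀ H)) ∧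
      ∃ σ : N →+ N, (∀ x : N, σ x ∈ K) ∧ ∀ a ∈ K, σ a = a :=
  finite_summand_extends_to_infinite_sum_summand_general N n F V h1 h2 H hHfin ρ hρmem hρid
end

section
/- Let N be an abelian group, n ≥ 1 an integer, and H a finite subgroup of N. Suppose that for every integer m ≥ 1 there are endomorphisms F_m, V_m : N → N such that: (i) for all x ∈ N, (2+mn)•F_m(V_m(x)) − F_m(V_m(F_m(V_m(x)))) = (1+mn)•x; and (ii) there exists r ∈ ℕ such that F_m(h) = 0 for all h ∈ H and all m ≥ r. Then there exists an integer m ≥ 1 such that gcd(1+mn, |H|) = 1, F_m vanishes on H, the restriction of V_m to H is injective, and V_m(H) ∩ H = {0}; in particular N contains a subgroup isomorphic to H × H. -/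
/-! If `V` is not injective on `H`, or moves a nonzero element of `H` into `H`, the Farrell
identity produces a nonzero `x ∈ H` with `(1 + m n) • x = 0`. Choosing `m` a multiple of `|H|`
beyond `r` makes `1 + m n` prime to `|H|` and kills `F m` on `H`, which rules both out; then
`(a, b) ↦ V a + b` embeds `H × H` into `N`. -/

theorem AddSubgroup.eq_zero_of_nsmul_eq_zero_of_coprime {G : Type*} [AddGroup G]
    {H : AddSubgroup G} {k : ℕ} (hk : (Nat.card H).Coprime k) {x : G} (hx : x ∈ H)
    (h : k • x = 0) : x = 0 := by
  have : k • (⟨x, hx⟩ : H) = k • 0 := Subtype.ext (by simpa using h)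
  simpa using congrArg Subtype.val (hk.nsmul_right_bijective.injective this)

section FarrellIdentity

variable {M P : Type*} [AddCommGroup M] [AddCommGroup P] {f : P →+ M} {v : M →+ P} {k : ℕ}

theorem nsmul_eq_nsmul_of_map_eq
    (hfv : ∀ x, (k + 1) • f (v x) - f (v (f (v x))) = k • x) {x y : M} (h : v x = v y) :
    k • x = k • y := by
  rw [← hfv x, ← hfv y, h]

theorem nsmul_eq_zero_of_map_map_eq_zero
    (hfv : ∀ x, (k + 1) • f (v x) - f (v (f (v x))) = k • x) {x : M} (h : f (v x) = 0) :
    k • x = 0 := by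
  rw [← hfv x, h]
  simp

theorem injOn_of_farrell_identity
    (hfv : ∀ x, (k + 1) • f (v x) - f (v (f (v x))) = k • x)
    {H : AddSubgroup M} (hk : (Nat.card H).Coprime k) : Set.InjOn v H := by
  intro x hx y hy hxy
  have hsub : k • (x - y) = 0 := by
    rw [smul_sub, nsmul_eq_nsmul_of_map_eq hfv hxy, sub_self]
  exact sub_eq_zero.mp (H.eq_zero_of_nsmul_eq_zero_of_coprime hk (H.sub_mem hx hy) hsub)

end FarrellIdentity

theorem map_inf_eq_bot_of_farrell_identity {N : Type*} [AddCommGroup N] {f v : N →+ N} {k : ℕ}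
    (hfv : ∀ x, (k + 1) • f (v x) - f (v (f (v x))) = k • x)
    {H : AddSubgroup N} (hk : (Nat.card H).Coprime k) (hf : ∀ h ∈ H, f h = 0) :
    H.map v ⊓ H = ⊥ := by
  rw [eq_bot_iff]
  rintro _ ⟨⟨x, hx, rfl⟩, hvx⟩
  have hx0 : x = 0 :=
    H.eq_zero_of_nsmul_eq_zero_of_coprime hk hx (nsmul_eq_zero_of_map_map_eq_zero hfv (hf _ hvx))
  simp [hx0]

theorem AddSubgroup.exists_addEquiv_prod_of_injOn_of_map_inf_eq_bot {N : Type*} [AddCommGroup N]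
    {H : AddSubgroup N} {φ : N →+ N} (hinj : Set.InjOn φ H) (hdisj : H.map φ ⊓ H = ⊥) :
    ∃ K : AddSubgroup N, Nonempty (K ≃+ (H × H)) := by
  let ψ : (H × H) →+ N := (φ.comp H.subtype).coprod H.subtype
  have hψ : Function.Injective ψ := by
    rw [injective_iff_map_eq_zero]
    rintro ⟨a, b⟩ hab
    have hab' : φ a + b = 0 := hab
    have hφa : φ a ∈ H.map φ ⊓ H :=
      ⟨⟨a, a.2, rfl⟩, eq_neg_of_add_eq_zero_left hab' ▸ H.neg_mem b.2⟩
    rw [hdisj, AddSubgroup.mem_bot] at hφa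
    have ha : (a : N) = 0 := hinj a.2 H.zero_mem (by rw [hφa, map_zero])
    have hb : (b : N) = 0 := by simpa [hφa] using hab'
    ext <;> simp [ha, hb]
  exact ⟨ψ.range, ⟨(AddMonoidHom.ofInjective hψ).symm⟩⟩

theorem doubling_of_finite_subgroup_general
    (N : Type*) [AddCommGroup N] (n : ℕ)
    (H : AddSubgroup N) (hHfin : Finite H)
    (F V : ℕ → N →+ N)
    (h1 : ∀ m : ℕ, 1 ≤ m → ∀ x : N,
      (2 + m * n) • F m (V m x) - F m (V m (F m (V m x))) = (1 + m * n) • x)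
    (r : ℕ) (h2 : ∀ h ∈ H, ∀ m : ℕ, r ≤ m → F m h = 0) :
    ∃ m : ℕ, 1 ≤ m ∧ Nat.gcd (1 + m * n) (Nat.card H) = 1 ∧
      (∀ h ∈ H, F m h = 0) ∧
      Set.InjOn (V m) (H : Set N) ∧
      (H.map (V m)) ⊓ H = ⊥ ∧
      ∃ K : AddSubgroup N, Nonempty (K ≃+ (H × H)) := by
  have hcard : 0 < Nat.card H := Nat.card_pos
  set m := (r + 1) * Nat.card H
  have hrm : r + 1 ≤ m := Nat.le_mul_of_pos_right _ hcard
  have hcop : (1 + m * n).Coprime (Nat.card H) := by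
    rw [show 1 + m * n = 1 + Nat.card H * ((r + 1) * n) by ring, Nat.coprime_add_mul_left_left]
    exact Nat.coprime_one_left _
  have hfv : ∀ x, (1 + m * n + 1) • F m (V m x) - F m (V m (F m (V m x))) = (1 + m * n) • x :=
    fun x => by rw [show 1 + m * n + 1 = 2 + m * n by ring]; exact h1 m (by omega) x
  have hF : ∀ h ∈ H, F m h = 0 := fun h hh => h2 h hh m (by omega)
  have hinj := injOn_of_farrell_identity hfv hcop.symm
  have hdisj := map_inf_eq_bot_of_farrell_identity hfv hcop.symm hF
  exact ⟨m, by omega, hcop, hF, hinj, hdisj,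
    H.exists_addEquiv_prod_of_injOn_of_map_inf_eq_bot hinj hdisj⟩

/-- **Doubling step in the proof of Theorem B.** Given the Farrell identity for all `m ≥ 1`
and an `r` such that `F m` vanishes on the finite subgroup `H` for all `m ≥ r`, there is an
`m ≥ 1` with `gcd(1+mn, |H|) = 1` such that `F m` vanishes on `H`, `V m` is injective on `H`,
and `V m (H) ∩ H = {0}`; in particular `N` contains a subgroup isomorphic to `H × H`. -/
theorem doubling_of_finite_subgroup
    (N : Type*) [AddCommGroup N] (n : ℕ) (hn : 1 ≤ n)
    (H : AddSubgroup N) (hHfin : Finite H)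
    (F V : ℕ → N →+ N)
    (h1 : ∀ m : ℕ, 1 ≤ m → ∀ x : N,
      (2 + m * n) • F m (V m x) - F m (V m (F m (V m x))) = (1 + m * n) • x)
    (r : ℕ) (h2 : ∀ h ∈ H, ∀ m : ℕ, r ≤ m → F m h = 0) :
    ∃ m : ℕ, 1 ≤ m ∧ Nat.gcd (1 + m * n) (Nat.card H) = 1 ∧
      (∀ h ∈ H, F m h = 0) ∧
      Set.InjOn (V m) (H : Set N) ∧
      (H.map (V m)) ⊓ H = ⊥ ∧
      ∃ K : AddSubgroup N, Nonempty (K ≃+ (H × H)) :=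
  doubling_of_finite_subgroup_general N n H hHfin F V h1 r h2
end

section
/- Let N be an abelian group, let n, m ≥ 1 be integers, and let F, V : N → N be endomorphisms such that G := F ∘ V satisfies (2+mn)•G(x) − G(G(x)) = (1+mn)•x for all x ∈ N. Let H be a finite subgroup of N of exponent e with F(h) = 0 for all h ∈ H, let ρ : N → N be a homomorphism with ρ(N) ⊆ H and ρ(h) = h for all h ∈ H, and let l ≥ 1 be an integer with l·(1+mn) ≡ 1 (mod e). Define λ : N → N by λ(x) = l•V(ρ((2+mn)•F(x) − G(F(x)))). Then: (a) λ(N) ⊆ V(H); (b) λ(V(h)) = V(h) for all h ∈ H; and (c) λ(h) = 0 for all h ∈ H. In other words, λ is a retraction of N onto V(H) which vanishes on H. -/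
theorem retraction_onto_shifted_copy_general
    (N : Type*) [AddCommGroup N] (n m : ℕ)
    (F V : N →+ N)
    (hG : ∀ x : N, (2 + m * n) • F (V x) - F (V (F (V x))) = (1 + m * n) • x)
    (H : AddSubgroup N)
    (e : ℕ) (he : IsLeast {k : ℕ | 1 ≤ k ∧ ∀ h ∈ H, k • h = 0} e)
    (hFH : ∀ h ∈ H, F h = 0)
    (ρ : N →+ N) (hρmem : ∀ x : N, ρ x ∈ H) (hρid : ∀ h ∈ H, ρ h = h)
    (l : ℕ) (hle : l * (1 + m * n) ≡ 1 [MOD e])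
    (lam : N → N)
    (hlam : ∀ x : N, lam x = l • V (ρ ((2 + m * n) • F x - F (V (F x))))) :
    (∀ x : N, lam x ∈ H.map V) ∧
    (∀ h ∈ H, lam (V h) = V h) ∧
    (∀ h ∈ H, lam h = 0) := by
  refine ⟨fun x ↦ ?_, fun h hh ↦ ?_, fun h hh ↦ ?_⟩
  · rw [hlam]
    exact (H.map V).nsmul_mem (AddSubgroup.mem_map_of_mem V (hρmem _)) l
  · have hVh : e • V h = 0 := by rw [← map_nsmul, he.1.2 h hh, map_zero]
    calc lam (V h) = l • V (ρ ((1 + m * n) • h)) := by rw [hlam, hG]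
      _ = (l * (1 + m * n)) • V h := by rw [map_nsmul, hρid h hh, map_nsmul, mul_smul]
      _ = V h := by rw [nsmul_eq_nsmul_of_modEq hle hVh, one_smul]
  · simp only [hlam, hFH h hh, map_zero, smul_zero, sub_zero]

/-- **Retraction construction in the proof of Theorem B.** Given endomorphisms `F, V` of `N`
whose composite `G = F ∘ V` satisfies `(2+mn) • G x - G (G x) = (1+mn) • x`, a finite
subgroup `H` of exponent `e` on which `F` vanishes, a retraction `ρ` of `N` onto `H`, and
`l ≥ 1` with `l(1+mn) ≡ 1 (mod e)`, the map `λ x = l • V (ρ ((2+mn) • F x - G (F x)))` is a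
retraction of `N` onto `V(H)` vanishing on `H`. -/
theorem retraction_onto_shifted_copy
    (N : Type*) [AddCommGroup N] (n m : ℕ) (hn : 1 ≤ n) (hm : 1 ≤ m)
    (F V : N →+ N)
    (hG : ∀ x : N, (2 + m * n) • F (V x) - F (V (F (V x))) = (1 + m * n) • x)
    (H : AddSubgroup N) (hHfin : Finite H)
    (e : ℕ) (he : IsLeast {k : ℕ | 1 ≤ k ∧ ∀ h ∈ H, k • h = 0} e)
    (hFH : ∀ h ∈ H, F h = 0)
    (ρ : N →+ N) (hρmem : ∀ x : N, ρ x ∈ H) (hρid : ∀ h ∈ H, ρ h = h)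
    (l : ℕ) (hl : 1 ≤ l) (hle : l * (1 + m * n) ≡ 1 [MOD e])
    (lam : N → N)
    (hlam : ∀ x : N, lam x = l • V (ρ ((2 + m * n) • F x - F (V (F x))))) :
    (∀ x : N, lam x ∈ H.map V) ∧
    (∀ h ∈ H, lam (V h) = V h) ∧
    (∀ h ∈ H, lam h = 0) :=
  retraction_onto_shifted_copy_general N n m F V hG H e he hFH ρ hρmem hρid l hle lam hlam
end

section
/- Let G be an abelian group and let H, K be subgroups of G with H ∩ K = {0}. Suppose there are retractions λ : G → H and ρ : G → K (homomorphisms with λ(G) ⊆ H, λ(h) = h for all h ∈ H, ρ(G) ⊆ K, ρ(k) = k for all k ∈ K) such that λ(K) = {0}. Then there exists a subgroup L of G which is isomorphic to H, satisfies L ∩ K = {0}, and such that the subgroup L + K (the internal direct sum of L and K) is a direct summand of G. -/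
/-!
Shear `H` off `K`: put `L = (1 - ρ) H`. Since `λ` kills `K ⊇ ρ G`, `λ (h - ρ h) = h` for `h ∈ H`, so
`1 - ρ` maps `H` isomorphically onto `L`; and `ρ` vanishes on `L` while fixing `K`, so `L ∩ K = 0`.
Then `σ = (1 - ρ) ∘ λ + ρ` maps `G` into `L + K`, fixes `K` (as `λ K = 0`) and fixes `h - ρ h`
(as `λ (h - ρ h) = h` and `ρ (h - ρ h) = 0`).
-/

namespace AddMonoidHom

variable {G : Type*} [AddCommGroup G]

structure IsRetraction (ρ : G →+ G) (K : AddSubgroup G) : Prop where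
  map_mem : ∀ x, ρ x ∈ K
  map_eq_self : ∀ k ∈ K, ρ k = k

namespace IsRetraction

variable {H K : AddSubgroup G} {lam ρ : G →+ G}

theorem map_map (hρ : ρ.IsRetraction K) (x : G) : ρ (ρ x) = ρ x :=
  hρ.map_eq_self _ (hρ.map_mem x)

theorem map_eq_zero_of_mem_map_sub (hρ : ρ.IsRetraction K) :
    ∀ x ∈ H.map (AddMonoidHom.id G - ρ), ρ x = 0 := by
  rintro _ ⟨h, -, rfl⟩
  simp [hρ.map_map]

theorem inf_eq_bot_of_forall_map_eq_zero (hρ : ρ.IsRetraction K) {L : AddSubgroup G}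
    (hL : ∀ x ∈ L, ρ x = 0) : L ⊓ K = ⊥ :=
  eq_bot_iff.2 fun x ⟨hxL, hxK⟩ =>
    AddSubgroup.mem_bot.2 <| (hρ.map_eq_self x hxK).symm.trans (hL x hxL)

def equivMapSub (hlam : lam.IsRetraction H) (hρ : ρ.IsRetraction K)
    (hlamK : ∀ k ∈ K, lam k = 0) : H ≃+ H.map (AddMonoidHom.id G - ρ) :=
  (ofLeftInverse (f := (AddMonoidHom.id G - ρ).comp H.subtype)
      (g := lam.codRestrict H hlam.map_mem) fun h => Subtype.ext <| by
        simp [hlamK _ (hρ.map_mem h), hlam.map_eq_self h h.2]).trans <|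
    AddEquiv.addSubgroupCongr <| by rw [range_comp, AddSubgroup.range_subtype]

theorem isRetraction_map_sub_sup (hlam : lam.IsRetraction H) (hρ : ρ.IsRetraction K)
    (hlamK : ∀ k ∈ K, lam k = 0) :
    ((AddMonoidHom.id G - ρ).comp lam + ρ).IsRetraction
      (H.map (AddMonoidHom.id G - ρ) ⊔ K) where
  map_mem x :=
    AddSubgroup.add_mem_sup (AddSubgroup.mem_map_of_mem _ (hlam.map_mem x)) (hρ.map_mem x)
  map_eq_self a ha := by
    obtain ⟨_, ⟨h, hh, rfl⟩, k, hk, rfl⟩ := AddSubgroup.mem_sup.1 ha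
    simp [hρ.map_map, hlamK _ (hρ.map_mem _), hlam.map_eq_self h hh, hlamK k hk,
      hρ.map_eq_self k hk]

end IsRetraction

end AddMonoidHom

theorem splitting_lemma_general
    (G : Type*) [AddCommGroup G] (H K : AddSubgroup G)
    (lam ρ : G →+ G)
    (hlamH : ∀ x : G, lam x ∈ H) (hlamid : ∀ h ∈ H, lam h = h)
    (hρK : ∀ x : G, ρ x ∈ K) (hρid : ∀ k ∈ K, ρ k = k)
    (hlamK : ∀ k ∈ K, lam k = 0) :
    ∃ L : AddSubgroup G, Nonempty (L ≃+ H) ∧ L ⊓ K = ⊥ ∧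
      ∃ σ : G →+ G, (∀ x : G, σ x ∈ L ⊔ K) ∧ ∀ a ∈ L ⊔ K, σ a = a := by
  have hlam : lam.IsRetraction H := ⟨hlamH, hlamid⟩
  have hρ : ρ.IsRetraction K := ⟨hρK, hρid⟩
  obtain ⟨hσ_mem, hσ_fix⟩ := hlam.isRetraction_map_sub_sup hρ hlamK
  exact ⟨H.map (AddMonoidHom.id G - ρ), ⟨(hlam.equivMapSub hρ hlamK).symm⟩,
    hρ.inf_eq_bot_of_forall_map_eq_zero hρ.map_eq_zero_of_mem_map_sub, _, hσ_mem, hσ_fix⟩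

/-- **Lemma 5.2 (splitting lemma).** Let `H, K ≤ G` with `H ∩ K = {0}`, and suppose there are
retractions `λ : G → H` and `ρ : G → K` with `λ(K) = {0}`. Then there is a subgroup `L ≤ G`
isomorphic to `H`, with `L ∩ K = {0}`, such that `L + K` is a direct summand of `G`. -/
theorem splitting_lemma
    (G : Type*) [AddCommGroup G] (H K : AddSubgroup G) (hHK : H ⊓ K = ⊥)
    (lam ρ : G →+ G)
    (hlamH : ∀ x : G, lam x ∈ H) (hlamid : ∀ h ∈ H, lam h = h)
    (hρK : ∀ x : G, ρ x ∈ K) (hρid : ∀ k ∈ K, ρ k = k)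
    (hlamK : ∀ k ∈ K, lam k = 0) :
    ∃ L : AddSubgroup G, Nonempty (L ≃+ H) ∧ L ⊓ K = ⊥ ∧
      ∃ σ : G →+ G, (∀ x : G, σ x ∈ L ⊔ K) ∧ ∀ a ∈ L ⊔ K, σ a = a :=
  splitting_lemma_general G H K lam ρ hlamH hlamid hρK hρid hlamK
end

section
/- Let N be an abelian group, n ≥ 1 an integer, and T : N → N an endomorphism with T^n = id. For an integer m ≥ 0 define the endomorphism g := id + m•(T + T² + ⋯ + T^n) (i.e. g(x) = x + m•∑_{i=1}^{n} T^i(x)). Then for all x ∈ N, (2+mn)•g(x) − g(g(x)) = (1+mn)•x. -/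
/-!
Write `s = 1 + T + ⋯ + Tⁿ⁻¹`. Since `Tⁿ = 1`, multiplying `s` by any power of `T` only
permutes its summands, so `T + T² + ⋯ + Tⁿ = s` and `s * s = n • s`. Hence `g = 1 + m • s`
satisfies `g² = 1 + (2m + m²n) • s`, i.e. `(g - 1) (g - (1 + mn)) = 0`, which is the identity.
-/

open Finset

section GeomSum

variable {R : Type*} [Semiring R] {x : R} {n : ℕ}

theorem sum_range_pow_succ_eq_geom_sum_of_pow_eq_one (hx : x ^ n = 1) :
    ∑ i ∈ range n, x ^ (i + 1) = ∑ i ∈ range n, x ^ i := by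
  cases n with
  | zero => rfl
  | succ k => rw [sum_range_succ, hx, sum_range_succ' (fun i => x ^ i), pow_zero]

theorem geom_sum_mul_pow_of_pow_eq_one (hx : x ^ n = 1) (k : ℕ) :
    (∑ i ∈ range n, x ^ i) * x ^ k = ∑ i ∈ range n, x ^ i := by
  induction k with
  | zero => rw [pow_zero, mul_one]
  | succ k ih =>
    rw [pow_succ, ← mul_assoc, ih, sum_mul]
    simp_rw [← pow_succ]
    exact sum_range_pow_succ_eq_geom_sum_of_pow_eq_one hx

theorem geom_sum_mul_self_of_pow_eq_one (hx : x ^ n = 1) :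
    (∑ i ∈ range n, x ^ i) * (∑ i ∈ range n, x ^ i) = n • ∑ i ∈ range n, x ^ i := by
  rw [mul_sum, sum_congr rfl fun k _ => geom_sum_mul_pow_of_pow_eq_one hx k, sum_const,
    card_range]

end GeomSum

theorem nsmul_one_add_nsmul_sub_mul_self_of_mul_self_eq_nsmul
    {R : Type*} [Ring R] {s : R} {n : ℕ} (hs : s * s = n • s) (m : ℕ) :
    (2 + m * n) • (1 + m • s) - (1 + m • s) * (1 + m • s) = (1 + m * n) • (1 : R) := by
  have hsq : (1 + m • s) * (1 + m • s) = 1 + (2 * m + m * m * n) • s := by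
    rw [add_mul, mul_add, mul_add, one_mul, mul_one, one_mul, smul_mul_smul_comm, hs, smul_smul]
    module
  rw [hsq]
  module

theorem farrell_quadratic_identity_general
    (N : Type*) [AddCommGroup N] (n : ℕ)
    (T : AddMonoid.End N) (hT : T ^ n = 1) (m : ℕ)
    (g : AddMonoid.End N)
    (hg : ∀ x : N, g x = x + m • (∑ i ∈ Finset.range n, (T ^ (i + 1)) x)) :
    ∀ x : N, (2 + m * n) • g x - g (g x) = (1 + m * n) • x := by
  have hg_eq : g = 1 + m • ∑ i ∈ range n, T ^ i := by
    ext x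
    rw [hg, ← sum_range_pow_succ_eq_geom_sum_of_pow_eq_one hT]
    exact congrArg (x + m • ·) (AddMonoidHom.finsetSum_apply _ _ _).symm
  intro x
  have key := congr($(nsmul_one_add_nsmul_sub_mul_self_of_mul_self_eq_nsmul
    (geom_sum_mul_self_of_pow_eq_one hT) m) x)
  rw [← hg_eq] at key
  exact key

/-- **Farrell's Lemma, part (2) (Lemma 4.1(2)).** If `T` is an endomorphism of an abelian
group `N` with `T^n = 1`, and `g = id + m • (T + T² + ⋯ + Tⁿ)`, then
`(2+mn) • g(x) - g(g(x)) = (1+mn) • x` for all `x`. -/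
theorem farrell_quadratic_identity
    (N : Type*) [AddCommGroup N] (n : ℕ) (hn : 1 ≤ n)
    (T : AddMonoid.End N) (hT : T ^ n = 1) (m : ℕ)
    (g : AddMonoid.End N)
    (hg : ∀ x : N, g x = x + m • (∑ i ∈ Finset.range n, (T ^ (i + 1)) x)) :
    ∀ x : N, (2 + m * n) • g x - g (g x) = (1 + m * n) • x :=
  farrell_quadratic_identity_general N n T hT m g hg
end

section
/- Let N be an abelian group with the property that for every finite subgroup H of N there exists a subgroup H' of N with H' isomorphic to H and H ∩ H' = {0}. Then for every finite subgroup H of N there is an injective group homomorphism from ⨁_ℕ H (the direct sum of countably infinitely many copies of H) into N. -/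
/-!
Choose embeddings `gₙ : H → N` one at a time: `gₙ` maps `H` into a disjoint copy of the finite
subgroup `H ⊔ range g₀ ⊔ ⋯ ⊔ range gₙ₋₁`. Each range then meets the sum of the earlier ones
trivially, which in the modular lattice of subgroups makes the ranges independent, so the induced
map `(ℕ →₀ H) → N` is injective.
-/

open Finset Function

theorem iSupIndep_of_disjoint_sup_range {α : Type*} [CompleteLattice α] [IsModularLattice α]
    [IsCompactlyGenerated α] {f : ℕ → α} (h : ∀ n, Disjoint (f n) ((range n).sup f)) :
    iSupIndep f := by
  have hrange : ∀ n, (range n).SupIndep f := by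
    intro n
    induction n with
    | zero => exact supIndep_empty f
    | succ n ih => rw [range_add_one]; exact ih.insert (h n)
  refine iSupIndep_iff_supIndep.2 fun s => (hrange (s.sup id + 1)).subset fun i hi => ?_
  exact mem_range_succ_iff.2 (le_sup (f := id) hi)

namespace AddSubgroup

variable {N : Type*} [AddCommGroup N]

theorem iSupIndep_of_disjoint_sup_range {f : ℕ → AddSubgroup N}
    (h : ∀ n, Disjoint (f n) ((range n).sup f)) : iSupIndep f := by
  -- `AddSubgroup N` lacks an `IsCompactlyGenerated` instance; `Submodule ℤ N` has one.
  rw [← iSupIndep_map_orderIso_iff toIntSubmodule]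
  refine _root_.iSupIndep_of_disjoint_sup_range fun n => ?_
  simpa [← map_finset_sup] using h n

theorem finite_sup (A B : AddSubgroup N) [Finite A] [Finite B] : Finite ↥(A ⊔ B) := by
  refine Set.Finite.to_subtype ?_
  rw [add_normal]
  exact (Set.toFinite _).add (Set.toFinite _)

end AddSubgroup

theorem Finsupp.liftAddHom_injective_of_iSupIndep {ι G N : Type*} [AddCommGroup G]
    [AddCommGroup N] {g : ι → G →+ N} (hinj : ∀ i, Injective (g i))
    (hind : iSupIndep fun i => (g i).range) : Injective (Finsupp.liftAddHom g) := by
  classical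
  have hfactor : Finsupp.liftAddHom g = ((DFinsupp.sumAddHom fun i => (g i).range.subtype).comp
      (DFinsupp.mapRange.addMonoidHom fun i => (g i).rangeRestrict)).comp
      finsuppAddEquivDFinsupp.toAddMonoidHom := by
    ext i x
    simp
  have hmap : Injective (DFinsupp.mapRange.addMonoidHom fun i => (g i).rangeRestrict) :=
    (DFinsupp.mapRange_injective _ fun i => map_zero _).2 fun i =>
      (g i).rangeRestrict_injective_iff.2 (hinj i)
  rw [hfactor]
  exact (hind.dfinsuppSumAddHom_injective.comp hmap).comp finsuppAddEquivDFinsupp.injective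

def HasDisjointFiniteCopies (N : Type*) [AddCommGroup N] : Prop :=
  ∀ H : AddSubgroup N, Finite H → ∃ H' : AddSubgroup N, Nonempty (H' ≃+ H) ∧ H ⊓ H' = ⊥

section DisjointCopies

variable {N : Type*} [AddCommGroup N]

theorem HasDisjointFiniteCopies.exists_injective_disjoint (hN : HasDisjointFiniteCopies N)
    (H K : AddSubgroup N) [Finite H] [Finite K] :
    ∃ φ : H →+ N, Injective φ ∧ Disjoint K φ.range := by
  obtain ⟨H', ⟨e⟩, hdisj⟩ := hN (K ⊔ H) (AddSubgroup.finite_sup K H)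
  let φ : H →+ N :=
    H'.subtype.comp (e.symm.toAddMonoidHom.comp (AddSubgroup.inclusion le_sup_right))
  have hrange : φ.range ≤ H' := by
    rintro _ ⟨x, rfl⟩
    exact (e.symm _).2
  refine ⟨φ, H'.subtype_injective.comp (e.symm.injective.comp (AddSubgroup.inclusion_injective _)),
    ?_⟩
  exact (disjoint_iff.2 hdisj).mono le_sup_left hrange

theorem exists_seq_injective_disjoint_sup_range {G : Type*} [AddCommGroup G] [Finite G]
    (hstep : ∀ K : AddSubgroup N, Finite K → ∃ φ : G →+ N, Injective φ ∧ Disjoint K φ.range) :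
    ∃ g : ℕ → G →+ N,
      ∀ n, Injective (g n) ∧ Disjoint (g n).range ((range n).sup fun i => (g i).range) := by
  choose! φ hφinj hφdisj using hstep
  let K : ℕ → AddSubgroup N := fun n => Nat.rec ⊥ (fun _ K => K ⊔ (φ K).range) n
  have hK : ∀ n, (range n).sup (fun i => (φ (K i)).range) = K n := by
    intro n
    induction n with
    | zero => rfl
    | succ n ih => rw [range_add_one, sup_insert, ih, sup_comm]
  have hfin : ∀ n, Finite ↥(K n) := by
    intro n
    induction n with
    | zero => exact inferInstanceAs (Finite (⊥ : AddSubgroup N))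
    | succ n ih =>
      have : Finite (φ (K n)).range := (Set.finite_range _).to_subtype
      exact AddSubgroup.finite_sup _ _
  refine ⟨fun n => φ (K n), fun n => ⟨hφinj _ (hfin n), ?_⟩⟩
  rw [hK]
  exact (hφdisj _ (hfin n)).symm

end DisjointCopies

/-- **Iteration step in the proof of Theorem B.** If every finite subgroup `H` of an abelian
group `N` admits a disjoint isomorphic copy `H'` inside `N` (`H' ≅ H`, `H ∩ H' = {0}`), then
for every finite subgroup `H` the direct sum of countably infinitely many copies of `H`
(encoded as `ℕ →₀ H`) embeds into `N`. -/
theorem doubling_implies_infinite_sum_embeds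
    (N : Type*) [AddCommGroup N]
    (h : ∀ H : AddSubgroup N, Finite H →
      ∃ H' : AddSubgroup N, Nonempty (H' ≃+ H) ∧ H ⊓ H' = ⊥) :
    ∀ H : AddSubgroup N, Finite H →
      ∃ f : (ℕ →₀ H) →+ N, Function.Injective f := by
  intro H _
  obtain ⟨g, hg⟩ := exists_seq_injective_disjoint_sup_range fun K _ =>
    HasDisjointFiniteCopies.exists_injective_disjoint h H K
  exact ⟨Finsupp.liftAddHom g, Finsupp.liftAddHom_injective_of_iSupIndep (fun n => (hg n).1)
    (AddSubgroup.iSupIndep_of_disjoint_sup_range fun n => (hg n).2)⟩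
end

section
/- Let N be a countable abelian group of finite exponent (i.e. there exists e ≥ 1 with e•x = 0 for all x ∈ N). Suppose that for every finite subgroup H of N which is a direct summand of N, there is a subgroup of N isomorphic to ⨁_ℕ H which is also a direct summand of N. Then there exists a finite abelian group H such that N is isomorphic to ⨁_ℕ H, the direct sum of countably infinitely many copies of H. -/
/-!
For exponent `n`, a maximal `ZMod n`-independent subset spans a free `ZMod n`-module; free
`ZMod n`-modules are injective (Baer's criterion), so this span splits off, and maximality forces
the complement to have smaller exponent. By induction on the exponent, a countable group `N` of
finite exponent has a finite direct summand `H` such that `N` is a direct summand of `H^(ℕ)`.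
The hypothesis makes `H^(ℕ)` a direct summand of `N` too, and the Eilenberg swindle turns the two
splittings into `N ≅ H^(ℕ)`.
-/

def IsRetract (X Y : Type*) [AddCommGroup X] [AddCommGroup Y] : Prop :=
  ∃ (i : X →+ Y) (r : Y →+ X), Function.LeftInverse r i

namespace IsRetract

variable {X Y Z W : Type*} [AddCommGroup X] [AddCommGroup Y] [AddCommGroup Z] [AddCommGroup W]

theorem of_addEquiv (e : X ≃+ Y) : IsRetract X Y :=
  ⟨e, e.symm, e.symm_apply_apply⟩

theorem trans (hXY : IsRetract X Y) (hYZ : IsRetract Y Z) : IsRetract X Z := by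
  obtain ⟨i, r, h⟩ := hXY
  obtain ⟨i', r', h'⟩ := hYZ
  exact ⟨i'.comp i, r.comp r', fun x => (congrArg r (h' (i x))).trans (h x)⟩

theorem prod (hXY : IsRetract X Y) (hZW : IsRetract Z W) : IsRetract (X × Z) (Y × W) := by
  obtain ⟨i, r, h⟩ := hXY
  obtain ⟨i', r', h'⟩ := hZW
  exact ⟨i.prodMap i', r.prodMap r', fun x => Prod.ext (h x.1) (h' x.2)⟩

theorem finsupp_single {ι : Type*} (a : ι) : IsRetract X (ι →₀ X) :=
  ⟨Finsupp.singleAddHom a, Finsupp.applyAddHom a, fun _ => Finsupp.single_eq_same⟩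

theorem finsupp_nat {ι : Type*} [Countable ι] : IsRetract (ι →₀ X) (ℕ →₀ X) := by
  obtain ⟨f, hf⟩ := Countable.exists_injective_nat ι
  let f' : ι ↪ ℕ := ⟨f, hf⟩
  exact ⟨Finsupp.embDomain.addMonoidHom f', Finsupp.comapDomain.addMonoidHom f'.injective,
    Finsupp.comapDomain_embDomain f'⟩

theorem of_addSubgroup (K : AddSubgroup Y) (σ : Y →+ Y) (hσ : ∀ y, σ y ∈ K)
    (hσK : ∀ a ∈ K, σ a = a) : IsRetract K Y :=
  ⟨K.subtype, σ.codRestrict K hσ, fun a => Subtype.ext (hσK a a.2)⟩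

end IsRetract

def AddMonoidHom.addEquivProdKer {X Y : Type*} [AddCommGroup X] [AddCommGroup Y] (r : Y →+ X)
    (i : X →+ Y) (h : Function.LeftInverse r i) : Y ≃+ X × r.ker where
  toFun y := (r y, ⟨y - i (r y), by simp [AddMonoidHom.mem_ker, h (r y)]⟩)
  invFun p := i p.1 + p.2
  left_inv y := by simp
  right_inv p := by
    have hp : r p.2 = 0 := p.2.2
    ext <;> simp [hp, h p.1]
  map_add' y z := by
    ext <;> simp only [map_add, Prod.fst_add, Prod.snd_add, AddSubgroup.coe_add]
    abel

section FinsuppEquiv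

variable {Y W : Type*} [AddCommGroup Y] [AddCommGroup W]

noncomputable def finsuppProdAddEquiv {ι : Type*} : (ι →₀ Y × W) ≃+ (ι →₀ Y) × (ι →₀ W) where
  toFun f := (f.mapRange Prod.fst rfl, f.mapRange Prod.snd rfl)
  invFun p := p.1.mapRange (fun y => (y, 0)) rfl + p.2.mapRange (fun w => (0, w)) rfl
  left_inv f := by ext <;> simp
  right_inv p := by ext <;> simp
  map_add' f g := by ext <;> simp

noncomputable def finsuppNatAddEquivProd : (ℕ →₀ Y) ≃+ (ℕ →₀ Y) × Y :=
  (Finsupp.domCongr Equiv.natSumPUnitEquivNat.{0}.symm).trans <|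
    Finsupp.sumFinsuppAddEquivProdFinsupp.trans <|
      (AddEquiv.refl _).prodCongr (Finsupp.uniqueAddEquiv PUnit.unit)

noncomputable def finsuppNatFinsuppNatAddEquiv : (ℕ →₀ ℕ →₀ Y) ≃+ (ℕ →₀ Y) :=
  Finsupp.curryAddEquiv.symm.trans (Finsupp.domCongr Nat.pairEquiv)

end FinsuppEquiv

theorem nonempty_addEquiv_finsupp_of_isRetract {H N : Type*} [AddCommGroup H] [AddCommGroup N]
    (hHN : IsRetract (ℕ →₀ H) N) (hNH : IsRetract N (ℕ →₀ H)) :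
    Nonempty (N ≃+ (ℕ →₀ H)) := by
  obtain ⟨i, r, hri⟩ := hHN
  let eN := r.addEquivProdKer i hri
  have hYH : IsRetract r.ker (ℕ →₀ H) :=
    .trans ⟨AddMonoidHom.inr _ _, AddMonoidHom.snd _ _, fun _ => rfl⟩
      (IsRetract.of_addEquiv eN.symm |>.trans hNH)
  obtain ⟨i', r', hri'⟩ := hYH
  let eH := r'.addEquivProdKer i' hri'
  let eHH : (ℕ →₀ H) ≃+ (ℕ →₀ r.ker) × (ℕ →₀ r'.ker) :=
    finsuppNatFinsuppNatAddEquiv.symm.trans <|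
      (Finsupp.mapRange.addEquiv eH).trans finsuppProdAddEquiv
  -- with `Y := r.ker`, `W := r'.ker`: `N ≅ H^(ℕ) × Y ≅ (Y^(ℕ) × Y) × W^(ℕ) ≅ Y^(ℕ) × W^(ℕ) ≅ H^(ℕ)`
  exact ⟨eN.trans <| (eHH.prodCongr (AddEquiv.refl _)).trans <| AddEquiv.prodAssoc.trans <|
    ((AddEquiv.refl _).prodCongr AddEquiv.prodComm).trans <| AddEquiv.prodAssoc.symm.trans <|
      (finsuppNatAddEquivProd.symm.prodCongr (AddEquiv.refl _)).trans eHH.symm⟩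

theorem Module.Baer.of_forall_exists_smul_eq {R Q : Type*} [CommRing R] [IsPrincipalIdealRing R]
    [AddCommGroup Q] [Module R Q]
    (h : ∀ (d : R) (m : Q), (∀ c, c * d = 0 → c • m = 0) → ∃ y, d • y = m) :
    Module.Baer R Q := by
  intro I f
  obtain ⟨d, rfl⟩ := (IsPrincipalIdealRing.principal I).principal
  have hd : d ∈ R ∙ d := Submodule.mem_span_singleton_self d
  obtain ⟨y, hy⟩ := h d (f ⟨d, hd⟩) fun c hc => by
    rw [← map_smul, show c • (⟨d, hd⟩ : R ∙ d) = 0 from Subtype.ext hc, map_zero]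
  refine ⟨LinearMap.toSpanSingleton R Q y, fun x hx => ?_⟩
  obtain ⟨c, rfl⟩ := Ideal.mem_span_singleton'.mp hx
  rw [LinearMap.toSpanSingleton_apply, mul_smul, hy, ← map_smul]
  rfl

instance ZMod.isPrincipalIdealRing (n : ℕ) : IsPrincipalIdealRing (ZMod n) :=
  .of_surjective (Int.castRingHom (ZMod n)) ZMod.intCast_surjective

theorem ZMod.dvd_of_forall_mul_eq_zero {n : ℕ} [NeZero n] {d x : ZMod n}
    (h : ∀ c, c * d = 0 → c * x = 0) : d ∣ x := by
  set g := d.val.gcd n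
  have hg : g ∣ n := Nat.gcd_dvd_right _ _
  have hq : 0 < n / g := Nat.div_pos (Nat.le_of_dvd (NeZero.pos n) hg)
    (Nat.gcd_pos_of_pos_right _ (NeZero.pos n))
  have hdvd_iff (y : ZMod n) : ((n / g : ℕ) : ZMod n) * y = 0 ↔ g ∣ y.val := by
    rw [← Nat.mul_dvd_mul_iff_left hq, Nat.div_mul_cancel hg, ← ZMod.natCast_eq_zero_iff,
      Nat.cast_mul, ZMod.natCast_zmod_val]
  have hgx : g ∣ x.val := (hdvd_iff x).mp (h _ ((hdvd_iff d).mpr (Nat.gcd_dvd_left _ _)))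
  calc d ∣ (g : ZMod n) := ⟨d⁻¹, (ZMod.mul_inv_eq_gcd d).symm⟩
    _ ∣ x := by rw [← ZMod.natCast_zmod_val x]; exact Nat.cast_dvd_cast hgx

theorem ZMod.baer_finsupp (n : ℕ) [NeZero n] (ι : Type*) : Module.Baer (ZMod n) (ι →₀ ZMod n) := by
  refine .of_forall_exists_smul_eq fun d m hm => ?_
  choose y hy using fun a => ZMod.dvd_of_forall_mul_eq_zero fun c hc => by
    simpa using congr($(hm c hc) a)
  refine ⟨m.sum fun a _ => Finsupp.single a (y a), ?_⟩
  rw [Finsupp.smul_sum]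
  conv_rhs => rw [← m.sum_single]
  exact Finsupp.sum_congr fun a _ => by rw [Finsupp.smul_single, smul_eq_mul, hy a]

theorem eq_zero_of_smul_eq_zero_of_addOrderOf_eq {M : Type*} [AddCommGroup M] {n : ℕ} [NeZero n]
    [Module (ZMod n) M] {b : M} (hb : addOrderOf b = n) {c : ZMod n} (hc : c • b = 0) : c = 0 := by
  rw [← ZMod.natCast_zmod_val c, Nat.cast_smul_eq_nsmul] at hc
  have := addOrderOf_dvd_of_nsmul_eq_zero hc
  rw [hb] at this
  exact (ZMod.val_eq_zero c).mp (Nat.eq_zero_of_dvd_of_lt this (ZMod.val_lt c))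

theorem AddSubgroup.exponent_lt_of_forall_addOrderOf_ne {M : Type*} [AddCommGroup M]
    (hM : AddMonoid.ExponentExists M) {B : AddSubgroup M}
    (hB : ∀ b ∈ B, addOrderOf b ≠ AddMonoid.exponent M) :
    AddMonoid.exponent B < AddMonoid.exponent M := by
  have hBM := AddMonoid.exponent_dvd_of_addMonoidHom B.subtype B.subtype_injective
  have hB' : AddMonoid.ExponentExists B :=
    AddMonoid.exponent_ne_zero.mp (ne_zero_of_dvd_ne_zero hM.exponent_ne_zero hBM)
  obtain ⟨b, hb⟩ := AddMonoid.exists_addOrderOf_eq_exponent hB'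
  refine (Nat.le_of_dvd hM.exponent_pos hBM).lt_of_ne fun h => hB b b.2 ?_
  rw [AddSubgroup.addOrderOf_coe, hb, h]

theorem ZMod.exists_retraction_finsupp {n : ℕ} (hn : 1 < n) (M : Type*) [AddCommGroup M]
    [Module (ZMod n) M] :
    ∃ (s : Set M) (ψ : M →ₗ[ZMod n] s →₀ ZMod n),
      Function.LeftInverse ψ (Finsupp.linearCombination (ZMod n) ((↑) : s → M)) ∧
      ∀ b, ψ b = 0 → ∃ a : ZMod n, a ≠ 0 ∧ a • b = 0 := by
  have : NeZero n := ⟨by omega⟩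
  have : Nontrivial (ZMod n) := ZMod.nontrivial_iff.mpr hn.ne'
  obtain ⟨s, hs, hmax⟩ := exists_maximal_linearIndepOn (ZMod n) (id : M → M)
  set φ := Finsupp.linearCombination (ZMod n) ((↑) : s → M)
  obtain ⟨ψ, hψ⟩ := (ZMod.baer_finsupp n s).extension_property φ hs.linearIndependent LinearMap.id
  have hψφ : Function.LeftInverse ψ φ := LinearMap.congr_fun hψ
  have hspan_ker : ∀ x ∈ Submodule.span (ZMod n) s, ψ x = 0 → x = 0 := by
    intro x hx hψx
    obtain ⟨f, rfl⟩ : x ∈ LinearMap.range φ := by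
      rwa [Finsupp.range_linearCombination, Subtype.range_coe]
    rw [hψφ f] at hψx
    rw [hψx, map_zero]
  refine ⟨s, ψ, hψφ, fun b hb => ?_⟩
  obtain ⟨a, ha, hab⟩ : ∃ a : ZMod n, a ≠ 0 ∧ a • b ∈ Submodule.span (ZMod n) s := by
    by_cases hbs : b ∈ s
    · exact ⟨1, one_ne_zero, by simpa using Submodule.subset_span hbs⟩
    · simpa using hmax b hbs
  exact ⟨a, ha, hspan_ker _ hab (by rw [map_smul, hb, smul_zero])⟩

theorem exists_addEquiv_finsupp_zmod_prod {M : Type*} [AddCommGroup M] {n : ℕ}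
    (hMn : AddMonoid.exponent M = n) (hn : 1 < n) :
    ∃ (s : Set M) (B : AddSubgroup M), s.Nonempty ∧ Nonempty (M ≃+ (s →₀ ZMod n) × B) ∧
      AddMonoid.exponent B < n := by
  subst hMn
  have : NeZero (AddMonoid.exponent M) := ⟨by omega⟩
  have hM : AddMonoid.ExponentExists M := AddMonoid.exponent_ne_zero.mp (by omega)
  let : Module (ZMod (AddMonoid.exponent M)) M :=
    AddCommGroup.zmodModule AddMonoid.exponent_nsmul_eq_zero
  obtain ⟨s, ψ, hψ, hker⟩ := ZMod.exists_retraction_finsupp hn M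
  have hker_order : ∀ b ∈ ψ.toAddMonoidHom.ker, addOrderOf b ≠ AddMonoid.exponent M :=
    fun b hb hbn =>
      let ⟨a, ha, hab⟩ := hker b hb
      ha (eq_zero_of_smul_eq_zero_of_addOrderOf_eq hbn hab)
  obtain ⟨x, hx⟩ := AddMonoid.exists_addOrderOf_eq_exponent hM
  obtain ⟨a, -⟩ := Finsupp.support_nonempty_iff.mpr fun hψx => hker_order x hψx hx
  exact ⟨s, _, ⟨a, a.2⟩,
    ⟨ψ.toAddMonoidHom.addEquivProdKer (Finsupp.linearCombination _ _).toAddMonoidHom hψ⟩,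
    AddSubgroup.exponent_lt_of_forall_addOrderOf_ne hM hker_order⟩

theorem exists_finite_isRetract_and_isRetract_finsupp (M : Type*) [AddCommGroup M] [Countable M]
    (hM : AddMonoid.ExponentExists M) :
    ∃ (H : Type) (_ : AddCommGroup H), Finite H ∧ IsRetract H M ∧ IsRetract M (ℕ →₀ H) := by
  induction hMn : AddMonoid.exponent M using Nat.strong_induction_on generalizing M with
  | _ n ih =>
  obtain hle | hn := le_or_gt n 1
  · have : Subsingleton M :=
      AddMonoid.exp_eq_one_iff.mp (by have := hM.exponent_ne_zero; omega)
    exact ⟨PUnit, inferInstance, inferInstance, ⟨0, 0, fun _ => rfl⟩,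
      ⟨0, 0, fun _ => Subsingleton.elim _ _⟩⟩
  have : NeZero n := ⟨by omega⟩
  obtain ⟨s, B, ⟨a, ha⟩, ⟨e⟩, hBn⟩ := exists_addEquiv_finsupp_zmod_prod hMn hn
  have hBM := AddMonoid.exponent_dvd_of_addMonoidHom B.subtype B.subtype_injective
  obtain ⟨H, _, hH, hHB, hBH⟩ := ih _ hBn B
    (AddMonoid.exponent_ne_zero.mp (ne_zero_of_dvd_ne_zero hM.exponent_ne_zero hBM)) rfl
  refine ⟨ZMod n × H, inferInstance, inferInstance, ?_, ?_⟩
  · exact ((IsRetract.finsupp_single (⟨a, ha⟩ : s)).prod hHB).trans (.of_addEquiv e.symm)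
  · exact (IsRetract.of_addEquiv e).trans <|
      (IsRetract.finsupp_nat.prod hBH).trans (.of_addEquiv finsuppProdAddEquiv.symm)

/-- **Theorem C (abstract form).** Let `N` be a countable abelian group of finite exponent.
If for every finite subgroup `H` of `N` which is a direct summand of `N` there is a subgroup
of `N` isomorphic to `⨁_ℕ H` which is also a direct summand of `N`, then there exists a
finite abelian group `H` with `N ≅ ⨁_ℕ H` (encoded as `ℕ →₀ H`). -/
theorem countable_finite_exponent_structure
    (N : Type*) [AddCommGroup N] [Countable N]
    (e : ℕ) (he : 1 ≤ e) (hexp : ∀ x : N, e • x = 0)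
    (h : ∀ H : AddSubgroup N, Finite H →
      (∃ ρ : N →+ N, (∀ x : N, ρ x ∈ H) ∧ ∀ a ∈ H, ρ a = a) →
      ∃ K : AddSubgroup N, Nonempty (K ≃+ (ℕ →₀ H)) ∧
        ∃ σ : N →+ N, (∀ x : N, σ x ∈ K) ∧ ∀ a ∈ K, σ a = a) :
    ∃ (H : Type) (_ : AddCommGroup H), Finite H ∧ Nonempty (N ≃+ (ℕ →₀ H)) := by
  obtain ⟨H, _, hH, ⟨i, r, hri⟩, hNH⟩ :=
    exists_finite_isRetract_and_isRetract_finsupp N ⟨e, he, hexp⟩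
  let eH : H ≃+ i.range := AddMonoidHom.ofInjective hri.injective
  obtain ⟨K, ⟨eK⟩, σ, hσ, hσK⟩ := h i.range (.of_equiv H eH.toEquiv)
    ⟨i.comp r, fun x => ⟨r x, rfl⟩, by rintro _ ⟨x, rfl⟩; exact congrArg i (hri x)⟩
  have hHN : IsRetract (ℕ →₀ H) N :=
    (IsRetract.of_addEquiv ((Finsupp.mapRange.addEquiv eH).trans eK.symm)).trans
      (.of_addSubgroup K σ hσ hσK)
  exact ⟨H, _, hH, nonempty_addEquiv_finsupp_of_isRetract hHN hNH⟩
end
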